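/- Let k = 𝔽₂ and R = 𝔽₂[X,Y]/(X,Y)². Then the Gorenstein dimension of Der_k(R) is infinite, i.e., Der_k(R) admits no finite resolution by totally reflexive R-modules. -/

import Mathlib

/-!
Over `R = k[x,y]/(x,y)² ≅ k ⋉ k²` the ideal `𝔪 = (x,y)` is killed by `𝔪`, so `R`-linear
functionals with values in `𝔪` are easy to write down. If `G → G**` is bijective this forces
`xG ∩ yG = 0`, and every `v ∈ G` with `xv = 0` to lie in `𝔪G`. Hence if `M` has an element killed
by `x` outside `𝔪M`, so does the kernel of any surjection `G → M` from such a `G` (lift the element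
to `g`; then `xg` works), and by induction `M` has no finite resolution by totally reflexive
modules. `Der_k(R)` has such an element: the derivation `x ∂/∂x` is killed by `x`, but it is not
in `𝔪 Der_k(R)` because every derivation sends `x` into `𝔪`.
-/

set_option synthInstance.maxHeartbeats 1000000
set_option maxHeartbeats 1000000

open MvPolynomial CategoryTheory

/-- The `i`-th Ext group `Ext^i_R(M, N)` of `R`-modules. -/
noncomputable abbrev extGroup (R : Type) [CommRing R] (M N : ModuleCat R) (i : ℕ) : Type :=
  ((Ext R (ModuleCat R) i).obj (Opposite.op M)).obj N

/-- An `R`-module `M` is totally reflexive if the natural map `M → M**` is an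
isomorphism and `Extⁱ_R(M,R) = Extⁱ_R(M*,R) = 0` for all `i ≥ 1`. -/
def TotallyReflexive (R : Type) [CommRing R] (M : Type) [AddCommGroup M] [Module R M] : Prop :=
  Function.Bijective (Module.Dual.eval R M) ∧
  ∀ i : ℕ, 1 ≤ i →
    Subsingleton (extGroup R (ModuleCat.of R M) (ModuleCat.of R R) i) ∧
    Subsingleton (extGroup R (ModuleCat.of R (Module.Dual R M)) (ModuleCat.of R R) i)

/-- `GdimLE R n M` holds when `M` admits a resolution of length `≤ n` by totally
reflexive `R`-modules, i.e. the Gorenstein dimension of `M` is at most `n`. -/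
def GdimLE (R : Type) [CommRing R] : ℕ → ∀ (M : Type) [AddCommGroup M] [Module R M], Prop
  | 0, M, _, _ => TotallyReflexive R M
  | (n+1), M, _, _ => ∃ (G : Type) (_ : AddCommGroup G) (_ : Module R G)
      (f : G →ₗ[R] M), Function.Surjective f ∧ TotallyReflexive R G ∧
      GdimLE R n (LinearMap.ker f)

/-- The ring `R = 𝔽₂[X,Y]/(X,Y)²`. -/
noncomputable abbrev R12 : Type :=
  MvPolynomial (Fin 2) (ZMod 2) ⧸
    ((Ideal.span {(X 0 : MvPolynomial (Fin 2) (ZMod 2)), X 1}) ^ 2)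

open TrivSqZeroExt

abbrev SqZeroPlane (k : Type*) [Field k] : Type _ :=
  MvPolynomial (Fin 2) k ⧸ (Ideal.span {(X 0 : MvPolynomial (Fin 2) k), X 1}) ^ 2

namespace SqZeroPlane

noncomputable section

variable (k : Type*) [Field k]

def x : SqZeroPlane k := Ideal.Quotient.mk _ (X 0)

def y : SqZeroPlane k := Ideal.Quotient.mk _ (X 1)

lemma mk_X_mul_X (i j : Fin 2) :
    (Ideal.Quotient.mk _ (X i * X j) : SqZeroPlane k) = 0 := by
  rw [Ideal.Quotient.eq_zero_iff_mem, pow_two]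
  exact Ideal.mul_mem_mul (Ideal.subset_span (by fin_cases i <;> simp))
    (Ideal.subset_span (by fin_cases j <;> simp))

@[simp] lemma x_mul_x : x k * x k = 0 := mk_X_mul_X k 0 0
@[simp] lemma x_mul_y : x k * y k = 0 := mk_X_mul_X k 0 1
@[simp] lemma y_mul_x : y k * x k = 0 := mk_X_mul_X k 1 0
@[simp] lemma y_mul_y : y k * y k = 0 := mk_X_mul_X k 1 1

lemma exists_eq_algebraMap_add_smul_x_add_smul_y (r : SqZeroPlane k) :
    ∃ c a b : k, r = algebraMap k _ c + a • x k + b • y k := by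
  obtain ⟨p, rfl⟩ := Ideal.Quotient.mk_surjective r
  induction p using MvPolynomial.induction_on with
  | C c => exact ⟨c, 0, 0, by simp [← Ideal.Quotient.mk_algebraMap]⟩
  | add p q hp hq =>
    obtain ⟨c, a, b, hp⟩ := hp
    obtain ⟨c', a', b', hq⟩ := hq
    exact ⟨c + c', a + a', b + b', by rw [map_add, hp, hq, map_add, add_smul, add_smul]; abel⟩
  | mul_X p i hp =>
    obtain ⟨c, a, b, hp⟩ := hp
    rw [map_mul, hp]
    fin_cases i
    · refine ⟨0, c, 0, ?_⟩
      change _ * x k = _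
      simp [add_mul, ← Algebra.smul_def]
    · refine ⟨0, 0, c, ?_⟩
      change _ * y k = _
      simp [add_mul, ← Algebra.smul_def]

def toTrivSqZeroExt : SqZeroPlane k →ₐ[k] TrivSqZeroExt k (k × k) :=
  Ideal.Quotient.liftₐ _ (aeval ![inr (1, 0), inr (0, 1)]) <| by
    rw [pow_two, Ideal.span_mul_span']
    refine fun p hp => (Ideal.span_le (I := RingHom.ker (aeval _))).mpr ?_ hp
    rintro _ ⟨a, ha, b, hb, rfl⟩
    rcases ha with rfl | rfl <;> rcases hb with rfl | rfl <;> simp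

@[simp] lemma toTrivSqZeroExt_x : toTrivSqZeroExt k (x k) = inr (1, 0) :=
  aeval_X (R := k) _ 0

@[simp] lemma toTrivSqZeroExt_y : toTrivSqZeroExt k (y k) = inr (0, 1) :=
  aeval_X (R := k) _ 1

lemma toTrivSqZeroExt_algebraMap_add_smul_x_add_smul_y (c a b : k) :
    toTrivSqZeroExt k (algebraMap k _ c + a • x k + b • y k) = inl c + inr (a, b) := by
  ext <;> simp [algebraMap_eq_inl]

def equivTrivSqZeroExt : SqZeroPlane k ≃ₐ[k] TrivSqZeroExt k (k × k) :=
  AlgEquiv.ofBijective (toTrivSqZeroExt k) <| by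
    refine ⟨(injective_iff_map_eq_zero _).mpr fun r hr => ?_, fun z => ?_⟩
    · obtain ⟨c, a, b, rfl⟩ := exists_eq_algebraMap_add_smul_x_add_smul_y k r
      rw [toTrivSqZeroExt_algebraMap_add_smul_x_add_smul_y] at hr
      have hc : c = 0 := by simpa using congrArg fst hr
      have hab : (a, b) = 0 := by simpa using congrArg snd hr
      simp_all
    · exact ⟨_, (toTrivSqZeroExt_algebraMap_add_smul_x_add_smul_y k z.fst z.snd.1 z.snd.2).trans
        (inl_fst_add_inr_snd_eq z)⟩

def residue : SqZeroPlane k →ₐ[k] k :=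
  (fstHom k k (k × k)).comp (equivTrivSqZeroExt k).toAlgHom

def xCoeff : SqZeroPlane k →ₗ[k] k :=
  LinearMap.fst k k k ∘ₗ sndHom k (k × k) ∘ₗ (equivTrivSqZeroExt k).toLinearMap

lemma residue_apply (r : SqZeroPlane k) : residue k r = (equivTrivSqZeroExt k r).fst := rfl

lemma xCoeff_apply (r : SqZeroPlane k) : xCoeff k r = (equivTrivSqZeroExt k r).snd.1 := rfl

@[simp] lemma equivTrivSqZeroExt_x : equivTrivSqZeroExt k (x k) = inr (1, 0) :=
  toTrivSqZeroExt_x k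

@[simp] lemma equivTrivSqZeroExt_y : equivTrivSqZeroExt k (y k) = inr (0, 1) :=
  toTrivSqZeroExt_y k

@[simp] lemma residue_x : residue k (x k) = 0 := by simp [residue_apply]
@[simp] lemma residue_y : residue k (y k) = 0 := by simp [residue_apply]
@[simp] lemma xCoeff_x : xCoeff k (x k) = 1 := by simp [xCoeff_apply]
@[simp] lemma xCoeff_y : xCoeff k (y k) = 0 := by simp [xCoeff_apply]

lemma xCoeff_mul (r s : SqZeroPlane k) :
    xCoeff k (r * s) = residue k r * xCoeff k s + residue k s * xCoeff k r := by
  simp [xCoeff_apply, residue_apply, snd_mul]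

lemma mul_eq_residue_smul (r : SqZeroPlane k) {t : SqZeroPlane k} (ht : residue k t = 0) :
    r * t = residue k r • t := by
  apply (equivTrivSqZeroExt k).injective
  rw [residue_apply] at ht
  ext <;> simp [residue_apply, snd_mul, ht]

lemma linearIndependent_x_y : LinearIndependent k ![x k, y k] := by
  refine LinearIndependent.pair_iff.mpr fun a b h => ?_
  simpa using congrArg (fun r => (equivTrivSqZeroExt k r).snd) h

lemma x_ne_zero : x k ≠ 0 := by simpa using (linearIndependent_x_y k).ne_zero 0

lemma y_ne_zero : y k ≠ 0 := by simpa using (linearIndependent_x_y k).ne_zero 1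

lemma mul_x (r : SqZeroPlane k) : r * x k = residue k r • x k :=
  mul_eq_residue_smul k r (residue_x k)

lemma mul_y (r : SqZeroPlane k) : r * y k = residue k r • y k :=
  mul_eq_residue_smul k r (residue_y k)

lemma residue_eq_zero_of_x_mul_eq_zero {t : SqZeroPlane k} (h : x k * t = 0) :
    residue k t = 0 := by
  rw [mul_comm, mul_x, smul_eq_zero] at h
  exact h.resolve_right (x_ne_zero k)

def maxIdeal : Ideal (SqZeroPlane k) := RingHom.ker (residue k)

@[simp] lemma mem_maxIdeal {r : SqZeroPlane k} : r ∈ maxIdeal k ↔ residue k r = 0 :=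
  RingHom.mem_ker

lemma maxIdeal_eq_span : maxIdeal k = Ideal.span {x k, y k} := by
  refine le_antisymm (fun r hr => ?_) ?_
  · obtain ⟨c, a, b, rfl⟩ := exists_eq_algebraMap_add_smul_x_add_smul_y k r
    have hc : c = 0 := by simpa using hr
    rw [hc, map_zero, zero_add, Algebra.smul_def, Algebra.smul_def]
    exact Ideal.mem_span_pair.mpr ⟨_, _, rfl⟩
  · rw [Ideal.span_le]
    rintro _ (rfl | rfl) <;> simp

lemma mem_maxIdeal_smul_iff {G : Type*} [AddCommGroup G] [Module (SqZeroPlane k) G]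
    {N : Submodule (SqZeroPlane k) G} {g : G} :
    g ∈ maxIdeal k • N ↔ ∃ a ∈ N, ∃ b ∈ N, x k • a + y k • b = g := by
  simp only [maxIdeal_eq_span, Ideal.span_insert, Submodule.sup_smul, Submodule.mem_sup,
    Submodule.ideal_span_singleton_smul, Submodule.mem_smul_pointwise_iff_exists]
  constructor
  · rintro ⟨_, ⟨a, ha, rfl⟩, _, ⟨b, hb, rfl⟩, rfl⟩
    exact ⟨a, ha, b, hb, rfl⟩
  · rintro ⟨a, ha, b, hb, rfl⟩
    exact ⟨_, ⟨a, ha, rfl⟩, _, ⟨b, hb, rfl⟩, rfl⟩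

section Modules

variable {k} {G : Type*} [AddCommGroup G] [Module (SqZeroPlane k) G]

lemma exists_addMonoidHom_map_smul_ne_zero {v : G}
    (hv : v ∉ maxIdeal k • (⊤ : Submodule (SqZeroPlane k) G)) :
    ∃ l : G →+ k, (∀ (r : SqZeroPlane k) g, l (r • g) = residue k r * l g) ∧ l v ≠ 0 := by
  set N := maxIdeal k • (⊤ : Submodule (SqZeroPlane k) G)
  let : Module k (G ⧸ N) := Module.compHom _ (algebraMap k (SqZeroPlane k))
  obtain ⟨φ, hφ⟩ : ∃ φ : Module.Dual k (G ⧸ N), φ (N.mkQ v) ≠ 0 := by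
    by_contra! h
    exact hv <| (Submodule.Quotient.mk_eq_zero N).mp <|
      (Module.forall_dual_apply_eq_zero_iff k _).mp h
  refine ⟨φ.toAddMonoidHom.comp N.mkQ.toAddMonoidHom, fun r g => ?_, hφ⟩
  have hmem : (r - algebraMap k _ (residue k r)) • g ∈ N :=
    Submodule.smul_mem_smul (by simp) Submodule.mem_top
  have : N.mkQ (r • g) = residue k r • N.mkQ g := by
    change _ = algebraMap k (SqZeroPlane k) (residue k r) • N.mkQ g
    rw [← map_smul, ← sub_eq_zero, ← map_sub, ← sub_smul, Submodule.mkQ_apply,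
      Submodule.Quotient.mk_eq_zero]
    exact hmem
  simp [this]

def smulDual (l : G →+ k) (hl : ∀ (r : SqZeroPlane k) g, l (r • g) = residue k r * l g)
    (t : SqZeroPlane k) (ht : residue k t = 0) : Module.Dual (SqZeroPlane k) G where
  toFun g := l g • t
  map_add' g h := by simp [add_smul]
  map_smul' r g := by
    rw [hl, mul_comm, mul_smul, ← mul_eq_residue_smul k r ht, RingHom.id_apply, smul_eq_mul,
      mul_smul_comm]

def evalXCoeff (v : G) (hv : x k • v = 0) :
    Module.Dual (SqZeroPlane k) (Module.Dual (SqZeroPlane k) G) where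
  toFun ψ := xCoeff k (ψ v) • x k
  map_add' ψ χ := by simp [add_smul]
  map_smul' r ψ := by
    have hψ : residue k (ψ v) = 0 :=
      residue_eq_zero_of_x_mul_eq_zero k (by rw [← smul_eq_mul, ← map_smul, hv, map_zero])
    rw [LinearMap.smul_apply, smul_eq_mul, mul_eq_residue_smul k r hψ, map_smul, smul_eq_mul,
      RingHom.id_apply, smul_eq_mul, mul_smul_comm, mul_x, smul_smul, mul_comm]

/- If `v ∉ 𝔪G`, the functional `ψ ↦ xCoeff (ψ v) • x` on `G*` is not an evaluation: at the
functionals `l(·) • x` and `l(·) • y` it would force both `l u = l v` and `l u = 0`. -/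
theorem mem_maxIdeal_smul_top_of_x_smul_eq_zero
    (hG : Function.Surjective (Module.Dual.eval (SqZeroPlane k) G)) {v : G} (hv : x k • v = 0) :
    v ∈ maxIdeal k • (⊤ : Submodule (SqZeroPlane k) G) := by
  by_contra hv'
  obtain ⟨l, hl, hlv⟩ := exists_addMonoidHom_map_smul_ne_zero hv'
  obtain ⟨u, hu⟩ := hG (evalXCoeff v hv)
  have key (t : SqZeroPlane k) (ht : residue k t = 0) : l u • t = xCoeff k (l v • t) • x k :=
    LinearMap.congr_fun hu (smulDual l hl t ht)
  have hx := key (x k) (residue_x k)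
  have hy := key (y k) (residue_y k)
  simp only [map_smul, xCoeff_x, xCoeff_y, smul_eq_mul, mul_one, mul_zero, zero_smul,
    smul_eq_zero, y_ne_zero, or_false] at hx hy
  exact hlv (hy ▸ smul_left_injective k (x_ne_zero k) hx).symm

theorem x_smul_eq_zero_of_eq_y_smul
    (hG : Function.Injective (Module.Dual.eval (SqZeroPlane k) G)) {s t : G}
    (h : x k • s = y k • t) : x k • s = 0 := by
  refine hG (LinearMap.ext fun ψ => ?_)
  have hs : ψ (x k • s) = residue k (ψ s) • x k := by
    rw [map_smul, smul_eq_mul, mul_comm, mul_x]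
  have ht : ψ (x k • s) = residue k (ψ t) • y k := by
    rw [h, map_smul, smul_eq_mul, mul_comm, mul_y]
  have h0 := (LinearIndependent.pair_iff.mp (linearIndependent_x_y k) (residue k (ψ s))
    (-residue k (ψ t)) (by rw [neg_smul, ← hs, ← ht, add_neg_cancel])).1
  simp only [Module.Dual.eval_apply, map_zero, LinearMap.zero_apply]
  rw [hs, h0, zero_smul]

theorem not_ker_lsmul_x_le_of_surjective {M : Type*} [AddCommGroup M]
    [Module (SqZeroPlane k) M]
    {f : G →ₗ[SqZeroPlane k] M} (hf : Function.Surjective f)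
    (hG : Function.Bijective (Module.Dual.eval (SqZeroPlane k) G))
    (hM : ¬ LinearMap.ker (LinearMap.lsmul (SqZeroPlane k) M (x k)) ≤ maxIdeal k • ⊤) :
    ¬ LinearMap.ker (LinearMap.lsmul (SqZeroPlane k) (LinearMap.ker f) (x k)) ≤
      maxIdeal k • ⊤ := by
  refine fun hK => hM fun w hw => ?_
  obtain ⟨g, rfl⟩ := hf w
  have hxg : x k • g ∈ LinearMap.ker f := by simpa using hw
  have hxxg : (⟨x k • g, hxg⟩ : LinearMap.ker f) ∈
      LinearMap.ker (LinearMap.lsmul (SqZeroPlane k) _ (x k)) := by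
    ext
    simp [smul_smul]
  obtain ⟨a, ha, b, -, hab⟩ :=
    (mem_maxIdeal_smul_iff k).mp ((Submodule.mem_smul_top_iff _ _ _).mp (hK hxxg))
  replace hab : x k • a + y k • b = x k • g := hab
  have hxa : x k • (g - a) = 0 :=
    x_smul_eq_zero_of_eq_y_smul hG.1 (by rw [smul_sub, ← hab]; abel)
  have hfa : f g = f (g - a) := by simp [LinearMap.mem_ker.mp ha]
  rw [hfa]
  exact Submodule.smul_top_le_comap_smul_top _ f
    (mem_maxIdeal_smul_top_of_x_smul_eq_zero hG.2 hxa)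

end Modules

theorem not_gdimLE {k : Type} [Field k] (n : ℕ) {M : Type} [AddCommGroup M]
    [Module (SqZeroPlane k) M]
    (hM : ¬ LinearMap.ker (LinearMap.lsmul (SqZeroPlane k) M (x k)) ≤ maxIdeal k • ⊤) :
    ¬ GdimLE (SqZeroPlane k) n M := by
  induction n generalizing M with
  | zero => exact fun hM' => hM fun v hv => mem_maxIdeal_smul_top_of_x_smul_eq_zero hM'.1.2 hv
  | succ n ih =>
    rintro ⟨G, _, _, f, hf, hG, hK⟩
    exact ih (not_ker_lsmul_x_le_of_surjective hf hG.1 hM) hK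

def xPartialX : Derivation k (SqZeroPlane k) (SqZeroPlane k) :=
  Derivation.mk' ((xCoeff k).smulRight (x k)) fun a b => by
    simp only [LinearMap.smulRight_apply, xCoeff_mul, add_smul, smul_eq_mul, mul_smul_comm, mul_x,
      smul_smul, mul_comm]

lemma residue_derivation_x (D : Derivation k (SqZeroPlane k) (SqZeroPlane k)) :
    residue k (D (x k)) = 0 := by
  -- `x * y = 0` rather than `x * x = 0`: the latter says nothing in characteristic 2
  have h := D.leibniz (x k) (y k)
  rw [x_mul_y, map_zero, smul_eq_mul, smul_eq_mul, mul_comm (x k), mul_comm (y k), mul_x,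
    mul_y] at h
  exact (LinearIndependent.pair_iff.mp (linearIndependent_x_y k) _ _ h.symm).2

theorem not_ker_lsmul_x_le_derivation :
    ¬ LinearMap.ker (LinearMap.lsmul (SqZeroPlane k) (Derivation k (SqZeroPlane k) (SqZeroPlane k))
      (x k)) ≤ maxIdeal k • ⊤ := by
  intro h
  have hx : x k • xPartialX k = 0 := by
    ext r
    simp [xPartialX]
  have hD (D) (hD : D ∈ maxIdeal k • (⊤ : Submodule (SqZeroPlane k)
      (Derivation k (SqZeroPlane k) (SqZeroPlane k)))) : D (x k) = 0 := by
    refine Submodule.smul_induction_on hD (fun r hr D _ => ?_) (fun D E hD hE => by simp [hD, hE])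
    rw [Derivation.smul_apply, smul_eq_mul, mul_eq_residue_smul k r (residue_derivation_x k D),
      (mem_maxIdeal k).mp hr, zero_smul]
  simpa [xPartialX] using x_ne_zero k (by simpa [xPartialX] using hD _ (h hx))

end

end SqZeroPlane

/-- For `k = 𝔽₂` and `R = 𝔽₂[X,Y]/(X,Y)²`, the Gorenstein dimension of
`Der_k(R)` is infinite: `Der_k(R)` admits no finite resolution by totally reflexive
`R`-modules. -/
theorem stmt12 : ¬ ∃ n : ℕ, GdimLE R12 n (Derivation (ZMod 2) R12 R12) := by
  rintro ⟨n, hn⟩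
  -- elaborating `not_gdimLE` against `R12` directly times out in unification
  have : ¬ GdimLE (SqZeroPlane (ZMod 2)) n
      (Derivation (ZMod 2) (SqZeroPlane (ZMod 2)) (SqZeroPlane (ZMod 2))) :=
    SqZeroPlane.not_gdimLE n (SqZeroPlane.not_ker_lsmul_x_le_derivation _)
  exact this hn
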